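/- arXiv:1002.2970 — 2 statements merged into one kernel-verified Lean document; each statement's English description precedes it below -/
import Mathlib

section
/- For nonnegative reals Δ₁, …, Δ_T with ∑ᵢ Δᵢ ≥ δ where 0 ≤ δ ≤ 1/2 and each Δᵢ ≤ 1/2, the product ∏_{i=1}^T (1 - 2Δᵢ + 2Δᵢ²) is at most 1 - 2δ + 2δ². -/
private lemma P_key (a b : ℝ) (ha : 0 ≤ a) (ha' : a ≤ 1/2) (hb : 0 ≤ b) (hb' : b ≤ 1/2) :
    (1 - 2*a + 2*a^2) * (1 - 2*b + 2*b^2) ≤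
      1 - 2*(min (a+b) (1/2)) + 2*(min (a+b) (1/2))^2 := by
  rcases le_or_gt (a + b) (1/2) with h | h
  · rw [min_eq_left h]
    nlinarith [mul_nonneg ha hb, mul_nonneg (mul_nonneg ha hb) hb,
      mul_nonneg (mul_nonneg ha ha) hb]
  · rw [min_eq_right h.le]
    nlinarith [mul_nonneg ha hb, sq_nonneg (a+b-1/2), sq_nonneg (a-b),
      mul_nonneg (mul_nonneg ha hb) hb, mul_nonneg (mul_nonneg ha ha) hb,
      mul_nonneg (mul_nonneg ha hb) (mul_nonneg ha hb)]

private lemma P_prod (T : ℕ) (Δi : Fin T → ℝ)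
    (hnn : ∀ i, 0 ≤ Δi i) (hub : ∀ i, Δi i ≤ 1/2) :
    ∏ i, (1 - 2*Δi i + 2*(Δi i)^2) ≤
      1 - 2*(min (∑ i, Δi i) (1/2)) + 2*(min (∑ i, Δi i) (1/2))^2 := by
  induction T with
  | zero => simp
  | succ n ih =>
    rw [Fin.prod_univ_succ, Fin.sum_univ_succ]
    have h1 := ih (fun i => Δi i.succ) (fun i => hnn i.succ) (fun i => hub i.succ)
    set s := ∑ i : Fin n, Δi i.succ with hs
    have hs0 : 0 ≤ s := Finset.sum_nonneg fun i _ => hnn i.succ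
    set m := min s (1/2) with hm
    have hm0 : 0 ≤ m := le_min hs0 (by norm_num)
    have hm2 : m ≤ 1/2 := min_le_right _ _
    have ha := hnn 0
    have ha' := hub 0
    have hP0 : 0 ≤ 1 - 2*Δi 0 + 2*(Δi 0)^2 := by nlinarith
    have step := P_key (Δi 0) m ha ha' hm0 hm2
    have h2 : (1 - 2*Δi 0 + 2*(Δi 0)^2) * ∏ i : Fin n, (1 - 2*Δi i.succ + 2*(Δi i.succ)^2)
        ≤ (1 - 2*Δi 0 + 2*(Δi 0)^2) * (1 - 2*m + 2*m^2) :=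
      mul_le_mul_of_nonneg_left h1 hP0
    refine h2.trans (step.trans ?_)
    have hmin : min (Δi 0 + s) (1/2) ≤ min (Δi 0 + m) (1/2) := by
      rcases le_or_gt s (1/2) with h | h
      · rw [hm, min_eq_left h]
      · have hm' : m = 1/2 := min_eq_right h.le
        have h2 : min (Δi 0 + s) (1/2) = 1/2 := min_eq_right (by linarith)
        rw [h2, hm']
        exact le_min (by linarith) le_rfl
    have h3 : min (Δi 0 + s) (1/2) ≤ 1/2 := min_le_right _ _
    have h4 : 0 ≤ min (Δi 0 + s) (1/2 : ℝ) := le_min (by positivity) (by norm_num)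
    have h5 : min (Δi 0 + m) (1/2) ≤ 1/2 := min_le_right _ _
    nlinarith [hmin, h3, h4, h5]

theorem incremental_attack_bound (T : ℕ) (Δi : Fin T → ℝ) (δ : ℝ)
    (hnn : ∀ i, 0 ≤ Δi i) (hub : ∀ i, Δi i ≤ 1/2)
    (hδ0 : 0 ≤ δ) (hδ : δ ≤ 1/2) (hsum : δ ≤ ∑ i, Δi i) :
    ∏ i, (1 - 2*Δi i + 2*(Δi i)^2) ≤ 1 - 2*δ + 2*δ^2 := by
  have h := P_prod T Δi hnn hub
  set m := min (∑ i, Δi i) (1/2) with hm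
  have h1 : δ ≤ m := le_min hsum hδ
  have h2 : m ≤ 1/2 := min_le_right _ _
  nlinarith [h, h1, h2]
end

section
/- Subadditivity-type inequality: for all a, b ∈ [0,1], P₁(a)·P₁(b) ≤ P₁(min(a+b, 1)), where P₁(Δ) = 1 - 2Δ + 2Δ². -/
theorem P1_subadditive (a b : ℝ) (ha0 : 0 ≤ a) (ha1 : a ≤ 1) (hb0 : 0 ≤ b) (hb1 : b ≤ 1) :
    (1 - 2*a + 2*a^2) * (1 - 2*b + 2*b^2)
      ≤ 1 - 2*(min (a + b) 1) + 2*(min (a + b) 1)^2 := by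
  rcases le_total (a + b) 1 with h | h
  · rw [min_eq_left h]
    nlinarith [sq_nonneg (a - b), sq_nonneg (a + b), mul_nonneg ha0 hb0,
      mul_nonneg (mul_nonneg ha0 hb0) (sub_nonneg.2 h), sq_nonneg (a*b)]
  · rw [min_eq_right h]
    have h1 : 1 - 2*a + 2*a^2 ≤ 1 := by nlinarith
    have h2 : 1 - 2*b + 2*b^2 ≤ 1 := by nlinarith
    have h3 : (0:ℝ) ≤ 1 - 2*b + 2*b^2 := by nlinarith [sq_nonneg (2*b - 1)]
    have h4 : (0:ℝ) ≤ 1 - 2*a + 2*a^2 := by nlinarith [sq_nonneg (2*a - 1)]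
    nlinarith [mul_le_one₀ h1 h3 h2]
end
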